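/- Let k ≥ 10 be an integer and let t > 0 be defined by (1/√(2π)) ∫_t^∞ e^{-z²/2} dz = 2^{-k-2}. Then sqrt(k ln 2) ≤ t ≤ sqrt(2k). -/

import Mathlib

/-- The upper-tail probability of a standard Gaussian:
`Pr[Z > s] = (1/√(2π)) ∫_s^∞ e^{-z²/2} dz`. -/
noncomputable def gaussTail (s : ℝ) : ℝ :=
  (Real.sqrt (2 * Real.pi))⁻¹ * ∫ z in Set.Ioi s, Real.exp (-z ^ 2 / 2)

/-!
The tail integral `∫_s^∞ e^{-z²/2} dz` is squeezed between `e^{-(s+1)²/2}` (integrate only over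
`(s, s+1]`, where the integrand is at least its value at `s + 1`) and `e^{-s²/2}` for `s ≥ 1`
(compare with the exact integral of `z e^{-z²/2}`). At `s = √(k ln 2)` the lower bound already
exceeds `2^{-k-2}`, at `s = √(2k)` the upper bound is `e^{-k} < 2^{-k-2}`, and since the tail is
antitone, `t` lies between these two points.
-/

open MeasureTheory Real Set Filter Topology

lemma integrable_exp_neg_sq_div_two : Integrable fun z : ℝ ↦ exp (-z ^ 2 / 2) := by
  simpa [neg_div, div_eq_inv_mul] using integrable_exp_neg_mul_sq (by norm_num : (0 : ℝ) < 1 / 2)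

lemma integrable_mul_exp_neg_sq_div_two : Integrable fun z : ℝ ↦ z * exp (-z ^ 2 / 2) := by
  simpa [neg_div, div_eq_inv_mul] using
    integrable_mul_exp_neg_mul_sq (by norm_num : (0 : ℝ) < 1 / 2)

lemma integral_Ioi_mul_exp_neg_sq_div_two (s : ℝ) :
    ∫ z in Ioi s, z * exp (-z ^ 2 / 2) = exp (-s ^ 2 / 2) := by
  have hderiv : ∀ x ∈ Ici s, HasDerivAt (fun x ↦ -exp (-x ^ 2 / 2)) (x * exp (-x ^ 2 / 2)) x := by
    intro x _
    have hsq : HasDerivAt (fun x : ℝ ↦ -x ^ 2 / 2) (-x) x := by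
      refine ((hasDerivAt_pow 2 x).neg.div_const 2).congr_deriv ?_
      simp only [Nat.cast_ofNat]
      ring
    exact hsq.exp.neg.congr_deriv (by ring)
  have hlim : Tendsto (fun x : ℝ ↦ -exp (-x ^ 2 / 2)) atTop (𝓝 0) := by
    have hsq : Tendsto (fun x : ℝ ↦ -x ^ 2 / 2) atTop atBot :=
      (tendsto_neg_atTop_atBot.comp (tendsto_pow_atTop two_ne_zero)).atBot_div_const two_pos
    simpa using (tendsto_exp_atBot.comp hsq).neg
  rw [integral_Ioi_of_hasDerivAt_of_tendsto' hderiv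
    integrable_mul_exp_neg_sq_div_two.integrableOn hlim]
  ring

lemma gaussTail_antitone : Antitone gaussTail := by
  intro a b hab
  refine mul_le_mul_of_nonneg_left ?_ (by positivity)
  exact setIntegral_mono_set integrable_exp_neg_sq_div_two.integrableOn
    (.of_forall fun z ↦ (exp_pos _).le) (Ioi_subset_Ioi hab).eventuallyLE

lemma gaussTail_le {s : ℝ} (hs : 1 ≤ s) :
    gaussTail s ≤ (√(2 * π))⁻¹ * exp (-s ^ 2 / 2) := by
  refine mul_le_mul_of_nonneg_left ?_ (by positivity)
  rw [← integral_Ioi_mul_exp_neg_sq_div_two s]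
  refine setIntegral_mono_on integrable_exp_neg_sq_div_two.integrableOn
    integrable_mul_exp_neg_sq_div_two.integrableOn measurableSet_Ioi fun z hz ↦ ?_
  exact le_mul_of_one_le_left (exp_pos _).le (hs.trans hz.le)

lemma le_gaussTail {s : ℝ} (hs : 0 ≤ s) :
    (√(2 * π))⁻¹ * exp (-(s + 1) ^ 2 / 2) ≤ gaussTail s := by
  refine mul_le_mul_of_nonneg_left ?_ (by positivity)
  calc exp (-(s + 1) ^ 2 / 2) = ∫ _ in Ioc s (s + 1), exp (-(s + 1) ^ 2 / 2) := by simp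
    _ ≤ ∫ z in Ioc s (s + 1), exp (-z ^ 2 / 2) := by
      refine setIntegral_mono_on (integrableOn_const (by simp))
        integrable_exp_neg_sq_div_two.integrableOn measurableSet_Ioc fun z hz ↦ ?_
      exact exp_le_exp.2 (by nlinarith [hz.1, hz.2])
    _ ≤ ∫ z in Ioi s, exp (-z ^ 2 / 2) :=
      setIntegral_mono_set integrable_exp_neg_sq_div_two.integrableOn
        (.of_forall fun z ↦ (exp_pos _).le) Ioc_subset_Ioi_self.eventuallyLE

lemma one_div_two_pow_eq_exp (n : ℕ) : 1 / (2 : ℝ) ^ n = exp (-(n * log 2)) := by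
  rw [exp_neg, ← log_pow, exp_log (by positivity), one_div]

lemma one_div_two_pow_lt_gaussTail_sqrt {k : ℕ} (hk : 10 ≤ k) :
    1 / 2 ^ (k + 2) < gaussTail √(k * log 2) := by
  set a := √(k * log 2)
  have ha2 : a ^ 2 = k * log 2 := sq_sqrt (by positivity)
  have ha : 2.63 ≤ a := by
    have : (10 : ℝ) ≤ k := by exact_mod_cast hk
    nlinarith [log_two_gt_d9, sqrt_nonneg (k * log 2)]
  have hS : log √(2 * π) < 1.507 := by
    have : √(2 * π) < 2.507 := by
      rw [sqrt_lt' (by norm_num)]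
      nlinarith [pi_lt_d6]
    linarith [log_le_sub_one_of_pos (show 0 < √(2 * π) by positivity)]
  -- with `a² = k log 2` the goal is `a + 1/2 + log √(2π) < a²/2 + 2 log 2`, true once `a ≥ 2.63`
  refine lt_of_lt_of_le ?_ (le_gaussTail (sqrt_nonneg _))
  rw [one_div_two_pow_eq_exp, ← exp_log (inv_pos.2 (sqrt_pos.2 (by positivity) : 0 < √(2 * π))),
    ← exp_add, exp_lt_exp, log_inv]
  push_cast
  nlinarith [log_two_gt_d9]

lemma gaussTail_sqrt_lt_one_div_two_pow {k : ℕ} (hk : 5 ≤ k) :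
    gaussTail √(2 * k) < 1 / 2 ^ (k + 2) := by
  have hk' : (5 : ℝ) ≤ k := by exact_mod_cast hk
  have hb2 : √(2 * k) ^ 2 = 2 * k := sq_sqrt (by positivity)
  have hb : 1 ≤ √(2 * k) := by nlinarith [sqrt_nonneg (2 * (k : ℝ))]
  have hS : 1 ≤ √(2 * π) := one_le_sqrt.2 (by nlinarith [pi_gt_three])
  calc gaussTail √(2 * k) ≤ (√(2 * π))⁻¹ * exp (-√(2 * k) ^ 2 / 2) := gaussTail_le hb
    _ ≤ exp (-k) := by
      rw [hb2, show -(2 * (k : ℝ)) / 2 = -k by ring]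
      exact mul_le_of_le_one_left (exp_pos _).le (inv_le_one_of_one_le₀ hS)
    _ < 1 / 2 ^ (k + 2) := by
      rw [one_div_two_pow_eq_exp, exp_lt_exp]
      push_cast
      nlinarith [log_two_lt_d9]

theorem stmt13_general (k : ℕ) (t : ℝ) (hk : 10 ≤ k)
    (htail : gaussTail t = 1 / 2 ^ (k + 2)) :
    Real.sqrt ((k : ℝ) * Real.log 2) ≤ t ∧ t ≤ Real.sqrt (2 * (k : ℝ)) := by
  constructor
  · by_contra! h
    have := gaussTail_antitone h.le
    linarith [one_div_two_pow_lt_gaussTail_sqrt hk]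
  · by_contra! h
    have := gaussTail_antitone h.le
    linarith [gaussTail_sqrt_lt_one_div_two_pow (k := k) (by omega)]

theorem stmt13 (k : ℕ) (t : ℝ) (hk : 10 ≤ k) (ht : 0 < t)
    (htail : gaussTail t = 1 / 2 ^ (k + 2)) :
    Real.sqrt ((k : ℝ) * Real.log 2) ≤ t ∧ t ≤ Real.sqrt (2 * (k : ℝ)) :=
  stmt13_general k t hk htail
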